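/- For all n ≥ i > j ≥ 0 and all f: P_i → ℝ, the Dirichlet form of the multi-level down-up walk equals the difference of variances across levels: E_{P_{i,j}^∇}(f) = Var_{π_i}(f) − Var_{π_j}(f^{(j)}), where f^{(j)} = P^↑_{j,i} f is the projection of f to level j via the up operator. -/

import Mathlib

open Finset
open scoped Classical

variable {E : Type*} [Fintype E] [DecidableEq E]

/-- `μ` is a probability distribution on the size-`n` faces (top level) of a pure
weighted simplicial complex with ground set `E`. -/
def IsDistOn (μ : Finset E → ℝ) (n : ℕ) : Prop :=
  (∀ S, 0 ≤ μ S) ∧ (∀ S, S.card ≠ n → μ S = 0) ∧ (∑ S, μ S = 1)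

/-- The induced distribution `π_k` on level `k`:
`π_k(S) = C(n,k)⁻¹ · Σ_{T ⊇ S} μ(T)` for `|S| = k`, and `0` otherwise. -/
noncomputable def piLev (μ : Finset E → ℝ) (n k : ℕ) (S : Finset E) : ℝ :=
  if S.card = k then (n.choose k : ℝ)⁻¹ * ∑ T ∈ univ.filter (fun T => S ⊆ T), μ T else 0

/-- The stationary distribution `π_{S,1}` of the local walk at the face `S`:
the one-element conditional distribution above `S`. -/
noncomputable def piLoc (μ : Finset E → ℝ) (n : ℕ) (S : Finset E) (a : E) : ℝ :=
  piLev μ n (S.card + 1) (insert a S) / ((S.card + 1) * piLev μ n S.card S)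

/-- The local walk `Q_S` at a face `S`:
`Q_S(a,b) = π_{i+2}(S∪a∪b) / ((i+2)·π_{i+1}(S∪a))` (0 when `a = b`). -/
noncomputable def localQ (μ : Finset E → ℝ) (n : ℕ) (S : Finset E) : Matrix E E ℝ :=
  Matrix.of fun a b =>
    piLev μ n (S.card + 2) (insert b (insert a S)) /
      ((S.card + 2) * piLev μ n (S.card + 1) (insert a S))

/-- The down operator `P↓_k` from level `k` to level `k−1`. -/
noncomputable def Pdown (k : ℕ) : Matrix (Finset E) (Finset E) ℝ :=
  Matrix.of fun S T => if T ⊆ S ∧ S.card = k ∧ T.card = k - 1 then (k : ℝ)⁻¹ else 0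

/-- The up operator `P↑_k` from level `k` to level `k+1`. -/
noncomputable def Pup (μ : Finset E → ℝ) (n k : ℕ) : Matrix (Finset E) (Finset E) ℝ :=
  Matrix.of fun S T => if S ⊆ T ∧ S.card = k ∧ T.card = k + 1 then
    piLev μ n (k + 1) T / (((k : ℝ) + 1) * piLev μ n k S) else 0

/-- The multi-level down operator from level `i` to level `j ≤ i`
(remove `i−j` uniformly random elements). -/
noncomputable def PdownM (i j : ℕ) : Matrix (Finset E) (Finset E) ℝ :=
  Matrix.of fun S T => if T ⊆ S ∧ S.card = i ∧ T.card = j then (i.choose j : ℝ)⁻¹ else 0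

/-- The multi-level up operator from level `j` to level `i ≥ j`
(add `i−j` elements according to the conditional distribution). -/
noncomputable def PupM (μ : Finset E → ℝ) (n j i : ℕ) : Matrix (Finset E) (Finset E) ℝ :=
  Matrix.of fun S T => if S ⊆ T ∧ S.card = j ∧ T.card = i then
    piLev μ n i T / ((i.choose j : ℝ) * piLev μ n j S) else 0

/-- Dirichlet form `E_P(f) = (1/2)·Σ_{a,b} π(a)P(a,b)(f(a)−f(b))²`. -/
noncomputable def dirichletForm {ι : Type*} [Fintype ι] (π : ι → ℝ)
    (P : Matrix ι ι ℝ) (f : ι → ℝ) : ℝ :=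
  (1 / 2) * ∑ a, ∑ b, π a * P a b * (f a - f b) ^ 2

/-- Variance `Var_π(f)` with respect to a weight `π` summing to 1. -/
noncomputable def varw {ι : Type*} [Fintype ι] (π : ι → ℝ) (f : ι → ℝ) : ℝ :=
  ∑ a, π a * (f a - ∑ b, π b * f b) ^ 2

lemma card_between (T W : Finset E) (k : ℕ) (hTW : T ⊆ W) (hk : T.card ≤ k) :
    (univ.filter (fun b : Finset E => T ⊆ b ∧ b ⊆ W ∧ b.card = k)).card
      = (W.card - T.card).choose (k - T.card) := by
  rw [← Finset.card_sdiff_of_subset hTW, ← Finset.card_powersetCard (k - T.card) (W \ T)]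
  apply Finset.card_bij' (fun b _ => b \ T) (fun c _ => c ∪ T)
  · intro b hb
    simp only [mem_filter, mem_univ, true_and] at hb
    obtain ⟨h1, h2, h3⟩ := hb
    rw [Finset.mem_powersetCard]
    exact ⟨Finset.sdiff_subset_sdiff h2 (le_refl T), by rw [Finset.card_sdiff_of_subset h1, h3]⟩
  · intro c hc
    rw [Finset.mem_powersetCard] at hc
    obtain ⟨h1, h2⟩ := hc
    have hdisj : Disjoint c T := Finset.disjoint_of_subset_left h1 (Finset.sdiff_disjoint)
    simp only [mem_filter, mem_univ, true_and]
    refine ⟨Finset.subset_union_right, Finset.union_subset (h1.trans Finset.sdiff_subset) hTW, ?_⟩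
    rw [Finset.card_union_of_disjoint hdisj, h2, Nat.sub_add_cancel hk]
  · intro b hb
    simp only [mem_filter, mem_univ, true_and] at hb
    exact Finset.sdiff_union_of_subset hb.1
  · intro c hc
    rw [Finset.mem_powersetCard] at hc
    have hdisj : Disjoint c T := Finset.disjoint_of_subset_left hc.1 (Finset.sdiff_disjoint)
    rw [Finset.union_sdiff_right, Finset.sdiff_eq_self_of_disjoint hdisj]

lemma sum_superset_mu (μ : Finset E → ℝ) (n : ℕ) (hμ : IsDistOn μ n)
    {T : Finset E} {i j : ℕ} (hT : T.card = j) (hji : j ≤ i) :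
    ∑ b ∈ univ.filter (fun b : Finset E => T ⊆ b ∧ b.card = i),
        (∑ W ∈ univ.filter (fun W => b ⊆ W), μ W)
      = ((n - j).choose (i - j) : ℝ) * ∑ W ∈ univ.filter (fun W => T ⊆ W), μ W := by
  simp only [Finset.sum_filter]
  have step : ∀ b : Finset E,
      (if T ⊆ b ∧ b.card = i then ∑ W, if b ⊆ W then μ W else 0 else 0)
        = ∑ W, if T ⊆ b ∧ b ⊆ W ∧ b.card = i then μ W else 0 := by
    intro b
    by_cases h : T ⊆ b ∧ b.card = i
    · rw [if_pos h]
      refine Finset.sum_congr rfl fun W _ => ?_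
      by_cases hbW : b ⊆ W
      · rw [if_pos hbW, if_pos ⟨h.1, hbW, h.2⟩]
      · rw [if_neg hbW, if_neg (by tauto)]
    · rw [if_neg h]
      rw [eq_comm]
      refine Finset.sum_eq_zero fun W _ => ?_
      rw [if_neg (by tauto)]
  simp_rw [step]
  rw [Finset.sum_comm]
  rw [Finset.mul_sum]
  refine Finset.sum_congr rfl fun W _ => ?_
  -- goal: ∑ b, if T ⊆ b ∧ b ⊆ W ∧ b.card = i then μ W else 0
  --     = (n-j).choose (i-j) * (if T ⊆ W then μ W else 0)
  rw [← Finset.sum_filter, Finset.sum_const, nsmul_eq_mul]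
  by_cases hμW : μ W = 0
  · simp [hμW]
  · have hW : W.card = n := by
      by_contra h; exact hμW (hμ.2.1 W h)
    by_cases hTW : T ⊆ W
    · rw [if_pos hTW, card_between T W i hTW (hT ▸ hji), hW, hT]
    · rw [if_neg hTW, mul_zero]
      have : (univ.filter (fun b : Finset E => T ⊆ b ∧ b ⊆ W ∧ b.card = i)) = ∅ := by
        rw [Finset.filter_eq_empty_iff]
        intro b _ hb
        exact hTW (hb.1.trans hb.2.1)
      rw [this, Finset.card_empty, Nat.cast_zero, zero_mul]

lemma piLev_nonneg (μ : Finset E → ℝ) (n k : ℕ) (hμ : IsDistOn μ n) (S : Finset E) :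
    0 ≤ piLev μ n k S := by
  unfold piLev
  split
  · exact mul_nonneg (by positivity) (Finset.sum_nonneg fun W _ => hμ.1 W)
  · exact le_refl 0

lemma sum_piLev_supersets (μ : Finset E → ℝ) (n : ℕ) (hμ : IsDistOn μ n)
    {T : Finset E} {i j : ℕ} (hT : T.card = j) (hji : j ≤ i) (hin : i ≤ n) :
    ∑ b ∈ univ.filter (fun b : Finset E => T ⊆ b ∧ b.card = i), piLev μ n i b
      = (i.choose j : ℝ) * piLev μ n j T := by
  have hni : (0:ℝ) < (n.choose i : ℝ) := by exact_mod_cast Nat.choose_pos hin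
  have hnj : (0:ℝ) < (n.choose j : ℝ) := by exact_mod_cast Nat.choose_pos (hji.trans hin)
  have e1 : ∑ b ∈ univ.filter (fun b : Finset E => T ⊆ b ∧ b.card = i), piLev μ n i b
      = (n.choose i : ℝ)⁻¹ * ∑ b ∈ univ.filter (fun b : Finset E => T ⊆ b ∧ b.card = i),
          (∑ W ∈ univ.filter (fun W => b ⊆ W), μ W) := by
    rw [Finset.mul_sum]
    refine Finset.sum_congr rfl fun b hb => ?_
    simp only [mem_filter, mem_univ, true_and] at hb
    rw [piLev, if_pos hb.2]
  rw [e1, sum_superset_mu μ n hμ hT hji, piLev, if_pos hT]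
  have key : (n.choose j : ℕ) * ((n-j).choose (i-j)) = (n.choose i) * (i.choose j) :=
    (Nat.choose_mul (n := n) hji).symm
  have keyR : ((n.choose j : ℝ)) * (((n:ℕ)-j).choose (i-j) : ℝ) = (n.choose i : ℝ) * (i.choose j : ℝ) := by
    exact_mod_cast congrArg (fun m : ℕ => (m : ℝ)) key
  field_simp
  nlinarith [keyR, Finset.sum_nonneg (fun W (_ : W ∈ univ.filter (fun W => T ⊆ W)) => hμ.1 W)]

lemma piLev_sum_one (μ : Finset E → ℝ) (n k : ℕ) (hμ : IsDistOn μ n) (hk : k ≤ n) :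
    ∑ S, piLev μ n k S = 1 := by
  have h0 : (∅ : Finset E).card = 0 := Finset.card_empty
  have := sum_piLev_supersets (T := (∅ : Finset E)) (i := k) (j := 0) μ n hμ h0 (Nat.zero_le k) hk
  rw [piLev, if_pos h0] at this
  simp only [Finset.empty_subset, true_and, Nat.choose_zero_right, Nat.cast_one, one_mul,
    inv_one, Finset.filter_true_of_mem (fun x _ => Finset.empty_subset x),
    Finset.filter_true] at this
  rw [hμ.2.2] at this
  rw [← this]
  refine (Finset.sum_filter_of_ne ?_).symm
  intro S _ hS
  rw [piLev] at hS
  by_contra h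
  rw [if_neg (by simpa using h)] at hS
  exact hS rfl

lemma piLev_zero_mono (μ : Finset E → ℝ) (n : ℕ) (hμ : IsDistOn μ n)
    {T a : Finset E} {i j : ℕ} (hTa : T ⊆ a) (hT : T.card = j) (hjn : j ≤ n)
    (h0 : piLev μ n j T = 0) : piLev μ n i a = 0 := by
  rw [piLev, if_pos hT] at h0
  have hnj : (0:ℝ) < (n.choose j : ℝ) := by exact_mod_cast Nat.choose_pos hjn
  have hsum : ∑ W ∈ univ.filter (fun W => T ⊆ W), μ W = 0 := by
    rcases mul_eq_zero.mp h0 with h | h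
    · exact absurd h (by positivity)
    · exact h
  have hall : ∀ W ∈ univ.filter (fun W : Finset E => T ⊆ W), μ W = 0 :=
    (Finset.sum_eq_zero_iff_of_nonneg (fun W _ => hμ.1 W)).mp hsum
  rw [piLev]
  split
  · rw [Finset.sum_eq_zero, mul_zero]
    intro W hW
    simp only [mem_filter, mem_univ, true_and] at hW
    exact hall W (by simp [hTa.trans hW])
  · rfl

lemma detailed_balance (μ : Finset E → ℝ) (n i j : ℕ) (hμ : IsDistOn μ n)
    (hji : j ≤ i) (hjn : j ≤ n) (a T : Finset E) :
    piLev μ n i a * PdownM i j a T = piLev μ n j T * PupM μ n j i T a := by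
  unfold PdownM PupM
  simp only [Matrix.of_apply]
  by_cases h : T ⊆ a ∧ a.card = i ∧ T.card = j
  · obtain ⟨h1, h2, h3⟩ := h
    rw [if_pos ⟨h1, h2, h3⟩, if_pos ⟨h1, h3, h2⟩]
    by_cases hT : piLev μ n j T = 0
    · have ha : piLev μ n i a = 0 := piLev_zero_mono μ n hμ h1 h3 hjn hT
      simp [ha, hT]
    · have hc : ((i.choose j : ℕ) : ℝ) ≠ 0 := by
        exact_mod_cast (Nat.choose_pos hji).ne'
      field_simp
  · rw [if_neg h, if_neg (by tauto), mul_zero, mul_zero]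

lemma down_rowsum (i j : ℕ) (hji : j ≤ i) {a : Finset E} (ha : a.card = i) :
    ∑ T, PdownM (E := E) i j a T = 1 := by
  unfold PdownM
  simp only [Matrix.of_apply]
  have e : ∀ T : Finset E, (if T ⊆ a ∧ a.card = i ∧ T.card = j then (i.choose j : ℝ)⁻¹ else 0)
      = if T ∈ a.powersetCard j then (i.choose j : ℝ)⁻¹ else 0 := by
    intro T
    congr 1
    simp only [Finset.mem_powersetCard, eq_iff_iff]
    tauto
  simp_rw [e]
  rw [Finset.sum_ite_mem, Finset.univ_inter, Finset.sum_const, Finset.card_powersetCard,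
    ha, nsmul_eq_mul]
  exact mul_inv_cancel₀ (by exact_mod_cast (Nat.choose_pos hji).ne')

lemma up_rowsum (μ : Finset E → ℝ) (n i j : ℕ) (hμ : IsDistOn μ n)
    (hji : j ≤ i) (hin : i ≤ n) {T : Finset E} (hT : piLev μ n j T ≠ 0) :
    ∑ b, PupM μ n j i T b = 1 := by
  have hTc : T.card = j := by
    by_contra h
    exact hT (by rw [piLev, if_neg h])
  unfold PupM
  simp only [Matrix.of_apply]
  have e : ∀ b : Finset E,
      (if T ⊆ b ∧ T.card = j ∧ b.card = i then piLev μ n i b / ((i.choose j : ℝ) * piLev μ n j T) else 0)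
      = if T ⊆ b ∧ b.card = i then piLev μ n i b / ((i.choose j : ℝ) * piLev μ n j T) else 0 := by
    intro b; congr 1; simp [hTc]
  simp_rw [e, ← Finset.sum_filter, ← Finset.sum_div,
    sum_piLev_supersets μ n hμ hTc hji hin]
  exact div_self (mul_ne_zero (by exact_mod_cast (Nat.choose_pos hji).ne') hT)

lemma up_stationary (μ : Finset E → ℝ) (n i j : ℕ) (hμ : IsDistOn μ n)
    (hji : j ≤ i) (hjn : j ≤ n) (a : Finset E) :
    ∑ T, piLev μ n j T * PupM μ n j i T a = piLev μ n i a := by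
  have e : ∀ T : Finset E, piLev μ n j T * PupM μ n j i T a
      = piLev μ n i a * PdownM i j a T :=
    fun T => (detailed_balance μ n i j hμ hji hjn a T).symm
  simp_rw [e, ← Finset.mul_sum]
  by_cases ha : a.card = i
  · rw [down_rowsum i j hji ha, mul_one]
  · rw [piLev, if_neg ha, zero_mul]

lemma varw_eq_sub {ι : Type*} [Fintype ι] (π f : ι → ℝ) (h1 : ∑ a, π a = 1) :
    varw π f = (∑ a, π a * f a ^ 2) - (∑ a, π a * f a) ^ 2 := by
  unfold varw
  have e : ∀ a, π a * (f a - ∑ b, π b * f b) ^ 2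
      = π a * f a ^ 2 - (2 * (∑ b, π b * f b)) * (π a * f a)
        + ((∑ b, π b * f b) ^ 2) * π a := fun a => by ring
  simp_rw [e]
  rw [Finset.sum_add_distrib, Finset.sum_sub_distrib, ← Finset.mul_sum, ← Finset.mul_sum, h1]
  ring

lemma double_sum_sq {ι : Type*} [Fintype ι] (u f : ι → ℝ) :
    ∑ a, ∑ b, u a * u b * (f a - f b) ^ 2
      = 2 * ((∑ a, u a * f a ^ 2) * (∑ a, u a) - (∑ a, u a * f a) ^ 2) := by
  have hin : ∀ a : ι, ∑ b, u a * u b * (f a - f b) ^ 2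
      = (u a * f a ^ 2) * (∑ c, u c) + u a * (∑ c, u c * f c ^ 2)
        - 2 * (u a * f a) * (∑ c, u c * f c) := by
    intro a
    rw [Finset.mul_sum univ (fun c => u c) (u a * f a ^ 2),
      Finset.mul_sum univ (fun c => u c * f c ^ 2) (u a),
      Finset.mul_sum univ (fun c => u c * f c) (2 * (u a * f a)),
      ← Finset.sum_add_distrib, ← Finset.sum_sub_distrib]
    exact Finset.sum_congr rfl fun b _ => by ring
  simp_rw [hin]
  rw [Finset.sum_sub_distrib, Finset.sum_add_distrib, ← Finset.sum_mul, ← Finset.sum_mul,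
    ← Finset.sum_mul, ← Finset.mul_sum]
  ring

/-- for `n ≥ i > j ≥ 0`, the Dirichlet form of the multi-level down-up
walk `P_{i,j}^∇ = P↓_{i,j} P↑_{j,i}` equals the difference of variances:
`E_{P_{i,j}^∇}(f) = Var_{π_i}(f) − Var_{π_j}(f^{(j)})`, with `f^{(j)} = P↑_{j,i} f`. -/
theorem downup_dirichlet_eq_var_difference (μ : Finset E → ℝ) (n i j : ℕ)
    (hij : j < i) (hin : i ≤ n) (hμ : IsDistOn μ n) (f : Finset E → ℝ) :
    dirichletForm (piLev μ n i) (PdownM i j * PupM μ n j i) f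
      = varw (piLev μ n i) f - varw (piLev μ n j) ((PupM μ n j i).mulVec f) := by
  have hji : j ≤ i := hij.le
  have hjn : j ≤ n := hji.trans hin
  have hg : ∀ T, (PupM μ n j i).mulVec f T = ∑ b, PupM μ n j i T b * f b := by
    intro T
    simp [Matrix.mulVec, dotProduct]
  have key : ∀ a b, piLev μ n i a * ((PdownM i j * PupM μ n j i : Matrix (Finset E) (Finset E) ℝ) a b)
      = ∑ T, piLev μ n j T * PupM μ n j i T a * PupM μ n j i T b := by
    intro a b
    rw [Matrix.mul_apply, Finset.mul_sum univ _ (piLev μ n i a)]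
    refine Finset.sum_congr rfl fun T _ => ?_
    rw [← mul_assoc, detailed_balance μ n i j hμ hji hjn a T]
  have mean_eq : ∑ T, piLev μ n j T * (PupM μ n j i).mulVec f T
      = ∑ a, piLev μ n i a * f a := by
    have e : ∀ T, piLev μ n j T * (PupM μ n j i).mulVec f T
        = ∑ b, piLev μ n j T * PupM μ n j i T b * f b := by
      intro T
      rw [hg T, Finset.mul_sum univ _ (piLev μ n j T)]
      exact Finset.sum_congr rfl fun b _ => (mul_assoc _ _ _).symm
    simp_rw [e]
    rw [Finset.sum_comm]
    refine Finset.sum_congr rfl fun b _ => ?_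
    rw [← Finset.sum_mul, up_stationary μ n i j hμ hji hjn b]
  have lhs_eq : dirichletForm (piLev μ n i) (PdownM i j * PupM μ n j i) f
      = (∑ a, piLev μ n i a * f a ^ 2)
        - ∑ T, piLev μ n j T * ((PupM μ n j i).mulVec f T) ^ 2 := by
    unfold dirichletForm
    have e1 : ∀ a b : Finset E,
        piLev μ n i a * ((PdownM i j * PupM μ n j i : Matrix (Finset E) (Finset E) ℝ) a b) * (f a - f b) ^ 2
        = ∑ T, piLev μ n j T
            * (PupM μ n j i T a * PupM μ n j i T b * (f a - f b) ^ 2) := by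
      intro a b
      rw [key a b, Finset.sum_mul]
      exact Finset.sum_congr rfl fun T _ => by ring
    simp_rw [e1]
    have e2 : ∀ a : Finset E, ∑ b, ∑ T, piLev μ n j T
          * (PupM μ n j i T a * PupM μ n j i T b * (f a - f b) ^ 2)
        = ∑ T, ∑ b, piLev μ n j T
          * (PupM μ n j i T a * PupM μ n j i T b * (f a - f b) ^ 2) :=
      fun a => Finset.sum_comm
    simp_rw [e2]
    rw [Finset.sum_comm]
    have e3 : ∀ T : Finset E, ∑ a, ∑ b, piLev μ n j T
          * (PupM μ n j i T a * PupM μ n j i T b * (f a - f b) ^ 2)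
        = 2 * ((∑ a, piLev μ n j T * (PupM μ n j i T a * f a ^ 2))
            - piLev μ n j T * ((PupM μ n j i).mulVec f T) ^ 2) := by
      intro T
      have pull : ∑ a, ∑ b, piLev μ n j T
            * (PupM μ n j i T a * PupM μ n j i T b * (f a - f b) ^ 2)
          = piLev μ n j T * ∑ a, ∑ b,
              PupM μ n j i T a * PupM μ n j i T b * (f a - f b) ^ 2 := by
        rw [Finset.mul_sum univ _ (piLev μ n j T)]
        refine Finset.sum_congr rfl fun a _ => ?_
        rw [Finset.mul_sum univ _ (piLev μ n j T)]
      rw [pull, double_sum_sq (fun x => PupM μ n j i T x) f, ← hg T,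
        ← Finset.mul_sum univ (fun a => PupM μ n j i T a * f a ^ 2) (piLev μ n j T)]
      by_cases hT : piLev μ n j T = 0
      · simp [hT]
      · rw [up_rowsum μ n i j hμ hji hin hT]
        ring
    simp_rw [e3]
    rw [← Finset.mul_sum, Finset.sum_sub_distrib]
    have e4 : ∑ T, ∑ a, piLev μ n j T * (PupM μ n j i T a * f a ^ 2)
        = ∑ a, piLev μ n i a * f a ^ 2 := by
      rw [Finset.sum_comm]
      refine Finset.sum_congr rfl fun a _ => ?_
      rw [← up_stationary μ n i j hμ hji hjn a, Finset.sum_mul]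
      exact Finset.sum_congr rfl fun T _ => by ring
    rw [e4]
    ring
  rw [lhs_eq, varw_eq_sub _ _ (piLev_sum_one μ n i hμ hin),
    varw_eq_sub _ _ (piLev_sum_one μ n j hμ hjn), mean_eq]
  ring
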